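/- arXiv:1808.09932 — 4 statements merged into one kernel-verified Lean document; each statement's English description precedes it below -/
import Mathlib

section
/- Let σ = (x y; z t) ∈ SL₂(ℤ), j ∈ ℤ and D ≥ 1. Set μ := gcd(x+zj, D), m := ∏_{p|μ} p^{val_p(D)} (the μ-part of D) and n := D/m. Then: (i) gcd(x+zj, n) = 1; (ii) gcd(r(x+zj) − nz, m) = 1 for every r ∈ ℤ, and in particular gcd(m, z) = 1; (iii) gcd(x+zj, y+tj) = 1; (iv) gcd(y+tj, m) = 1. -/
/-! All four claims come from two facts. The determinant identity shows that `a = x + z j` is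
coprime to both `z` and `b = y + t j`, and `μ ∣ a`. The `μ`-part `m` of `D` has the same prime
divisors as `μ`, and `n = D / m` is coprime to `μ` because `m` takes the full `p`-power of `D` at
each such prime. -/

/-- The `μ`-part of `D`: the product, over the primes `p` dividing `μ`,
of `p ^ (val_p D)`. -/
def muPart (D μ : ℕ) : ℕ :=
  ∏ p ∈ D.primeFactors.filter (fun p => p ∣ μ), p ^ (D.factorization p)

lemma muPart_dvd (μ : ℕ) {D : ℕ} (hD : D ≠ 0) : muPart D μ ∣ D := by
  conv_rhs => rw [Nat.prod_primeFactors_pow_factorization hD]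
  exact Finset.prod_dvd_prod_of_subset _ _ _ (Finset.filter_subset _ _)

lemma Nat.Prime.dvd_of_dvd_muPart {D μ p : ℕ} (hp : p.Prime) (h : p ∣ muPart D μ) :
    p ∣ μ := by
  obtain ⟨q, hq, hpq⟩ := hp.prime.exists_mem_finset_dvd h
  rw [Finset.mem_filter] at hq
  rw [(Nat.prime_dvd_prime_iff_eq hp (Nat.prime_of_mem_primeFactors hq.1)).mp
    (hp.dvd_of_dvd_pow hpq)]
  exact hq.2

lemma coprime_div_muPart (μ : ℕ) {D : ℕ} (hD : D ≠ 0) :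
    Nat.Coprime μ (D / muPart D μ) := by
  refine Nat.coprime_of_dvd fun p hp hpμ hpn => ?_
  have hpD : p ∣ D := hpn.trans (Nat.div_dvd_of_dvd (muPart_dvd μ hD))
  have hpow : p ^ D.factorization p ∣ muPart D μ :=
    Finset.dvd_prod_of_mem _ (by simp [hp, hpD, hD, hpμ])
  have hprod := mul_dvd_mul hpn hpow
  rw [Nat.div_mul_cancel (muPart_dvd μ hD), ← pow_succ'] at hprod
  exact Nat.pow_succ_factorization_not_dvd hD hp hprod

lemma Nat.Coprime.muPart_right {k μ : ℕ} (D : ℕ) (h : Nat.Coprime k μ) :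
    Nat.Coprime k (muPart D μ) :=
  Nat.coprime_of_dvd fun _ hp hpk hpm =>
    Nat.Prime.not_coprime_iff_dvd.mpr ⟨_, hp, hpk, hp.dvd_of_dvd_muPart hpm⟩ h

lemma IsCoprime.muPart_right {k : ℤ} {μ : ℕ} (D : ℕ) (h : IsCoprime k μ) :
    IsCoprime k (muPart D μ : ℤ) := by
  rw [Int.isCoprime_iff_gcd_eq_one] at h ⊢
  exact Nat.Coprime.muPart_right D h

theorem stmt_1 (D : ℕ) (hD : 1 ≤ D) (x y z t j : ℤ)
    (hdet : x * t - z * y = 1) :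
    let μ : ℕ := Int.gcd (x + z * j) (D : ℤ)
    let m : ℕ := muPart D μ
    let n : ℕ := D / m
    Int.gcd (x + z * j) (n : ℤ) = 1 ∧
    (∀ r : ℤ, Int.gcd (r * (x + z * j) - (n : ℤ) * z) (m : ℤ) = 1) ∧
    Int.gcd (x + z * j) (y + t * j) = 1 ∧
    Int.gcd (y + t * j) (m : ℤ) = 1 := by
  intro μ m n
  set a := x + z * j
  set b := y + t * j
  have hD0 : D ≠ 0 := by omega
  have hab : IsCoprime a b := ⟨t, -z, by linear_combination hdet⟩
  have haz : IsCoprime a z := ⟨t, -b, by linear_combination hdet⟩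
  obtain ⟨k, hk⟩ : (μ : ℤ) ∣ a := Int.gcd_dvd_left _ _
  have hμn : Nat.Coprime μ n := coprime_div_muPart μ hD0
  refine ⟨?_, fun r => ?_, Int.isCoprime_iff_gcd_eq_one.mp hab, ?_⟩
  · have hnD : (n : ℤ) ∣ D :=
      Int.natCast_dvd_natCast.mpr (Nat.div_dvd_of_dvd (muPart_dvd μ hD0))
    exact (hμn.coprime_dvd_left (Int.gcd_dvd_gcd_of_dvd_right a hnD)).eq_one_of_dvd
      (Int.natCast_dvd_natCast.mp (Int.gcd_dvd_right a n))
  · rw [← Int.isCoprime_iff_gcd_eq_one]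
    refine IsCoprime.muPart_right D ?_
    have hnz : IsCoprime (-(n * z)) μ :=
      ((Nat.isCoprime_iff_coprime.mpr hμn.symm).mul_left
        (haz.symm.of_isCoprime_of_dvd_right ⟨k, hk⟩)).neg_left
    have hsum : r * a - n * z = -(n * z) + μ * (r * k) := by rw [hk]; ring
    exact hsum ▸ hnz.add_mul_left_left (r * k)
  · rw [← Int.isCoprime_iff_gcd_eq_one]
    exact (hab.symm.of_isCoprime_of_dvd_right ⟨k, hk⟩).muPart_right D
end

section
/- Let D ≥ 1, let n be a positive divisor of D, and let a, b, c, d, x, y, z, t, j, κ ∈ ℤ with ad − bc = 1, xt − Dzy = 1, and κ·(a + cj) ≡ b + dj (mod n). Then (ty + t²κ)·(ax + bDz + (cx + dDz)·j) ≡ ay + bt + (cy + dt)·j (mod n). -/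
theorem stmt_4 (D : ℤ) (hD : 1 ≤ D) (n : ℤ) (hn : 0 < n) (hnD : n ∣ D)
    (a b c d x y z t j κ : ℤ)
    (h1 : a * d - b * c = 1) (h2 : x * t - D * z * y = 1)
    (hκ : κ * (a + c * j) ≡ b + d * j [ZMOD n]) :
    (t * y + t ^ 2 * κ) * (a * x + b * D * z + (c * x + d * D * z) * j)
      ≡ a * y + b * t + (c * y + d * t) * j [ZMOD n] := by
  obtain ⟨m, hm⟩ := hnD
  obtain ⟨k, hk⟩ := Int.modEq_iff_dvd.mp hκ
  rw [Int.modEq_iff_dvd]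
  refine ⟨t*k - m*z*y*(y+t*κ)*(a+c*j) - m*z*(t*y+t^2*κ)*(b+d*j), ?_⟩
  linear_combination t*hk - (y+t*κ)*(a+c*j)*h2
    - (z*y*(y+t*κ)*(a+c*j) + z*(t*y+t^2*κ)*(b+d*j))*hm
end

section
/- Let D ≡ 3 (mod 4) be a positive squarefree integer, c a positive divisor of D, (a b; c d) ∈ SL₂(ℤ) with lower-left entry the given c > 0, and x, y ∈ ℤ. Then Σ_{α, β ∈ ℤ/cℤ} e[(a(α² + αβ + ((D+1)/4)·β²) + (ax − y)·β)/c] equals c·G(ψ_c; a) if ax ≡ y (mod c), and equals 0 otherwise. -/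
open scoped Classical

/-- `e[x] = exp(2πix)`. -/
noncomputable def eC (x : ℂ) : ℂ := Complex.exp (2 * Real.pi * Complex.I * x)

/-!
Because `c ∣ D` and `4 · ((D + 1) / 4) = D + 1`, the coefficient `(D + 1) / 4` is `1/4` modulo
the odd number `c`, so modulo `c` the quadratic form is the square `(α + β/2)²`. Summing over `α`
first therefore gives, for every `β`, the quadratic Gauss sum `∑ₜ e[a t² / c]`, and the remaining
sum over `β` is the orthogonality sum of `e[(a x - y) β / c]`. For odd squarefree `c` and `a`
prime to `c` the quadratic Gauss sum is `G(ψ_c; a)`: both sides factor along the Chinese remainder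
theorem, and for a prime `p` the number of square roots of `s` modulo `p` is `1 + (s | p)`.
-/

open Finset

namespace ZMod

section

variable {n : ℕ} [NeZero n]

theorem sum_range_natCast {M : Type*} [AddCommMonoid M] (f : ZMod n → M) :
    ∑ t ∈ range n, f t = ∑ z, f z := by
  refine sum_nbij' (fun t => (t : ZMod n)) val ?_ ?_ ?_ ?_ ?_ <;>
    simp_all [Nat.mod_eq_of_lt, val_lt]

theorem jacobiSym_val_intCast (k : ℤ) : jacobiSym ((k : ZMod n).val) n = jacobiSym k n := by
  rw [val_intCast, ← jacobiSym.mod_left]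

theorem sum_eq_sum_mul_sum_of_coprime {R : Type*} [CommSemiring R] {m : ℕ} [NeZero m]
    (hmn : m.Coprime n) {f : ZMod (m * n) → R} {g₁ : ZMod m → R} {g₂ : ZMod n → R}
    (hfg : ∀ k : ℤ, f k = g₁ k * g₂ k) : ∑ z, f z = (∑ z, g₁ z) * ∑ z, g₂ z := by
  rw [sum_mul_sum, ← Fintype.sum_prod_type', ← (chineseRemainder hmn).toEquiv.sum_comp]
  refine Fintype.sum_congr _ _ fun z => ?_
  obtain ⟨k, rfl⟩ := intCast_surjective z
  simp [hfg, map_intCast]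

theorem stdAddChar_intCast_mul {m : ℕ} [NeZero m] {u v : ℤ} (huv : u * n + v * m = 1)
    (k : ℤ) :
    stdAddChar (k : ZMod (m * n)) =
      stdAddChar ((u * k : ℤ) : ZMod m) * stdAddChar ((v * k : ℤ) : ZMod n) := by
  rw [stdAddChar_coe, stdAddChar_coe, stdAddChar_coe, ← Complex.exp_add]
  have hm : (m : ℂ) ≠ 0 := NeZero.ne _
  have hn : (n : ℂ) ≠ 0 := NeZero.ne _
  have huv' : (u : ℂ) * n + v * m = 1 := by exact_mod_cast huv
  congr 1
  push_cast
  field_simp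
  linear_combination (-(k : ℂ)) * huv'

variable (n) in
noncomputable def quadGaussSum (a : ℤ) : ℂ := ∑ z : ZMod n, stdAddChar ((a : ZMod n) * z ^ 2)

variable (n) in
/-- `G(ψ_n; a)`, the Jacobi symbol being evaluated at the representative `z.val ∈ [0, n)`. -/
noncomputable def jacobiGaussSum (a : ℤ) : ℂ :=
  ∑ z : ZMod n, (jacobiSym z.val n : ℂ) * stdAddChar ((a : ZMod n) * z)

section Coprime

variable {m : ℕ} [NeZero m] {u v : ℤ}

theorem quadGaussSum_mul (hmn : m.Coprime n) (huv : u * n + v * m = 1) (a : ℤ) :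
    quadGaussSum (m * n) a = quadGaussSum m (u * a) * quadGaussSum n (v * a) :=
  sum_eq_sum_mul_sum_of_coprime hmn fun k => by
    have := stdAddChar_intCast_mul huv (a * k ^ 2)
    push_cast at this ⊢
    convert this using 3 <;> ring

theorem jacobiGaussSum_mul (hmn : m.Coprime n) (huv : u * n + v * m = 1) (a : ℤ) :
    jacobiGaussSum (m * n) a = jacobiGaussSum m (u * a) * jacobiGaussSum n (v * a) :=
  sum_eq_sum_mul_sum_of_coprime hmn fun k => by
    have := stdAddChar_intCast_mul huv (a * k)
    push_cast [← mul_assoc] at this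
    simp only [jacobiSym_val_intCast]
    rw [jacobiSym.mul_right, this]
    push_cast
    ring

end Coprime

theorem sum_sum_stdAddChar_quadForm (h2 : IsUnit (2 : ZMod n)) {K : ZMod n} (hK : 4 * K = 1)
    (A M : ZMod n) :
    ∑ z, ∑ w, stdAddChar (A * (z ^ 2 + z * w + K * w ^ 2) + M * w)
      = (if M = 0 then (n : ℂ) else 0) * ∑ z, stdAddChar (A * z ^ 2) := by
  obtain ⟨h, hh⟩ := h2.exists_right_inv
  have complete_sq (z w : ZMod n) : z ^ 2 + z * w + K * w ^ 2 = (z + h * w) ^ 2 := by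
    linear_combination (-(z * w) - K * w ^ 2 * (2 * h + 1)) * hh + h ^ 2 * w ^ 2 * hK
  calc _ = ∑ w, stdAddChar (w * M) * ∑ z, stdAddChar (A * (z + h * w) ^ 2) := by
        rw [sum_comm]
        refine sum_congr rfl fun w _ => ?_
        rw [mul_sum]
        refine sum_congr rfl fun z _ => ?_
        rw [complete_sq, ← AddChar.map_add_eq_mul, add_comm, mul_comm M]
    _ = ∑ w, stdAddChar (w * M) * ∑ z, stdAddChar (A * z ^ 2) := by
        refine sum_congr rfl fun w _ => congrArg _ ?_
        exact Fintype.sum_equiv (Equiv.addRight (h * w)) _ _ fun z => rfl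
    _ = _ := by
        rw [← sum_mul, AddChar.sum_mulShift _ (isPrimitive_stdAddChar n), ZMod.card,
          Nat.cast_ite, Nat.cast_zero]

end

theorem jacobiSym_val_eq_quadraticChar {p : ℕ} [Fact p.Prime] (z : ZMod p) :
    jacobiSym z.val p = quadraticChar (ZMod p) z := by
  rw [← jacobiSym.legendreSym.to_jacobiSym, legendreSym, Int.cast_natCast, natCast_zmod_val]

theorem quadGaussSum_eq_jacobiGaussSum_of_prime {p : ℕ} [Fact p.Prime] (hp : p ≠ 2) {a : ℤ}
    (ha : (a : ZMod p) ≠ 0) : quadGaussSum p a = jacobiGaussSum p a := by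
  have hchar : ringChar (ZMod p) ≠ 2 := by rwa [ringChar_zmod_n]
  have card_sqrts (s : ZMod p) : (#{z | z ^ 2 = s} : ℂ) = quadraticChar (ZMod p) s + 1 := by
    have := quadraticChar_card_sqrts hchar s
    rw [Set.toFinset_ofPred] at this
    exact_mod_cast this
  calc quadGaussSum p a
      = ∑ s, (#{z : ZMod p | z ^ 2 = s} : ℂ) * stdAddChar ((a : ZMod p) * s) := by
        rw [quadGaussSum, ← sum_fiberwise_of_maps_to' (g := fun z : ZMod p => z ^ 2)
          (fun z _ => mem_univ _) (fun s => stdAddChar ((a : ZMod p) * s))]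
        simp only [sum_const, nsmul_eq_mul]
    _ = jacobiGaussSum p a + ∑ s, stdAddChar (s * (a : ZMod p)) := by
        simp only [card_sqrts, add_mul, one_mul, sum_add_distrib, jacobiGaussSum,
          jacobiSym_val_eq_quadraticChar, mul_comm (a : ZMod p)]
    _ = jacobiGaussSum p a := by
        rw [AddChar.sum_mulShift _ (isPrimitive_stdAddChar p), if_neg ha, Nat.cast_zero,
          add_zero]

theorem quadGaussSum_eq_jacobiGaussSum {n : ℕ} [hn : NeZero n] (hodd : Odd n)
    (hsf : Squarefree n) {a : ℤ} (ha : IsCoprime a n) :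
    quadGaussSum n a = jacobiGaussSum n a := by
  induction n using Nat.recOnPosPrimePosCoprime generalizing a hn with
  | prime_pow p k hp hk =>
    obtain rfl : k = 1 := ((Nat.squarefree_pow_iff hp.ne_one hk.ne').mp hsf).2
    have : Fact p.Prime := ⟨hp⟩
    simp only [pow_one] at *
    refine quadGaussSum_eq_jacobiGaussSum_of_prime (hodd.ne_two_of_dvd_nat dvd_rfl) ?_
    exact ((coe_int_isUnit_iff_isCoprime a p).mpr ha.symm).ne_zero
  | zero => exact absurd rfl hn.ne
  | one =>
    rw [quadGaussSum, jacobiGaussSum, Fintype.sum_subsingleton _ 0, Fintype.sum_subsingleton _ 0]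
    simp
  | coprime m k hm hk hmk ihm ihk =>
    have : NeZero m := ⟨by omega⟩
    have : NeZero k := ⟨by omega⟩
    obtain ⟨u, v, huv⟩ : IsCoprime (k : ℤ) m := Nat.isCoprime_iff_coprime.mpr hmk.symm
    have hum : IsCoprime u m := ⟨k, v, by linear_combination huv⟩
    have hvk : IsCoprime v k := ⟨m, u, by linear_combination huv⟩
    rw [Nat.cast_mul] at ha
    rw [quadGaussSum_mul hmk huv, jacobiGaussSum_mul hmk huv,
      ihm (Nat.odd_mul.mp hodd).1 hsf.of_mul_left (hum.mul_left ha.of_mul_right_left),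
      ihk (Nat.odd_mul.mp hodd).2 hsf.of_mul_right (hvk.mul_left ha.of_mul_right_right)]

end ZMod

section

variable {n : ℕ} [NeZero n]

theorem eC_intCast_div (k : ℤ) : eC (k / n) = ZMod.stdAddChar (k : ZMod n) := by
  rw [ZMod.stdAddChar_coe, eC, mul_div_assoc]

theorem sum_range_eC_quadForm (a m : ℤ) (K : ℕ) :
    ∑ α ∈ range n, ∑ β ∈ range n,
        eC (((a : ℂ) * ((α : ℂ) ^ 2 + α * β + K * β ^ 2) + m * β) / n)
      = ∑ z : ZMod n, ∑ w : ZMod n,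
          ZMod.stdAddChar
            ((a : ZMod n) * (z ^ 2 + z * w + (K : ZMod n) * w ^ 2) + (m : ZMod n) * w) := by
  rw [← ZMod.sum_range_natCast]
  refine sum_congr rfl fun α _ => ?_
  rw [← ZMod.sum_range_natCast]
  refine sum_congr rfl fun β _ => ?_
  rw [show _ + _ = ((a * (α ^ 2 + α * β + K * β ^ 2) + m * β : ℤ) : ZMod n) by
    push_cast; ring, ← eC_intCast_div]
  push_cast
  ring

theorem sum_range_jacobiSym_mul_eC (a : ℤ) :
    ∑ s ∈ range n, (jacobiSym s n : ℂ) * eC (s * a / n) = ZMod.jacobiGaussSum n a := by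
  rw [ZMod.jacobiGaussSum, ← ZMod.sum_range_natCast]
  refine sum_congr rfl fun s hs => ?_
  rw [ZMod.val_natCast_of_lt (mem_range.mp hs),
    show (a : ZMod n) * s = ((s * a : ℤ) : ZMod n) by push_cast; ring, ← eC_intCast_div]
  push_cast
  ring

end

theorem stmt_7 (D : ℕ) (hD3 : D % 4 = 3) (hDsf : Squarefree D)
    (c : ℕ) (hcpos : 0 < c) (hcD : c ∣ D)
    (a b d x y : ℤ) (hdet : a * d - b * (c : ℤ) = 1) :
    ∑ α ∈ Finset.range c, ∑ β ∈ Finset.range c,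
        eC (((a : ℂ) * ((α : ℂ) ^ 2 + (α : ℂ) * (β : ℂ) +
              (((D + 1) / 4 : ℕ) : ℂ) * (β : ℂ) ^ 2) +
            ((a : ℂ) * (x : ℂ) - (y : ℂ)) * (β : ℂ)) / (c : ℂ))
      = if a * x ≡ y [ZMOD (c : ℤ)] then
          (c : ℂ) * ∑ s ∈ Finset.range c,
            ((jacobiSym (s : ℤ) c : ℤ) : ℂ) * eC ((s : ℂ) * (a : ℂ) / (c : ℂ))
        else 0 := by
  have : NeZero c := ⟨hcpos.ne'⟩
  have hodd : Odd c := (Nat.odd_iff.mpr (by omega)).of_dvd_nat hcD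
  have h2 : IsUnit (2 : ZMod c) := by
    exact_mod_cast (ZMod.isUnit_iff_coprime 2 c).mpr (Nat.coprime_two_left.mpr hodd)
  have hK : (4 : ZMod c) * ((D + 1) / 4 : ℕ) = 1 := by
    rw [← Nat.cast_ofNat, ← Nat.cast_mul, Nat.mul_div_cancel' (by omega), Nat.cast_succ,
      (ZMod.natCast_eq_zero_iff D c).mpr hcD, zero_add]
  have hcond : ((a * x - y : ℤ) : ZMod c) = 0 ↔ a * x ≡ y [ZMOD c] := by
    rw [Int.cast_sub, sub_eq_zero, ZMod.intCast_eq_intCast_iff]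
  rw [show (a : ℂ) * x - y = ((a * x - y : ℤ) : ℂ) by push_cast; ring, sum_range_eC_quadForm,
    ZMod.sum_sum_stdAddChar_quadForm h2 hK, ← ZMod.quadGaussSum,
    ZMod.quadGaussSum_eq_jacobiGaussSum hodd (hDsf.squarefree_of_dvd hcD)
      ⟨d, -b, by linear_combination hdet⟩, sum_range_jacobiSym_mul_eC]
  simp only [hcond]
  split_ifs <;> simp
end

section
/- Let k ∈ ℤ, N ≥ 1, and let β : ℤ_{≥1} × ℤ_{≥0} → ℂ satisfy: (a) β(p^v·q, d) − p^{k−1}·β(p^{v−1}·q, d) = β(q, p^{2v}·d) for every prime p with p ∤ Nq, every q ≥ 1, every d ≥ 0 and every v ≥ 1; and (b) β(u, d) = β(1, d·u²) whenever every prime divisor of u divides N. Then for all u ≥ 1 and d ≥ 0, β(u, d) = Σ_{e | u, gcd(e, N) = 1} e^{k−1}·β(1, d·(u/e)²). -/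
lemma sum_split_aux (k : ℤ) (N : ℕ) (f : ℕ → ℂ) (p q w d : ℕ) (hp : p.Prime)
    (hpN : ¬ p ∣ N) (hpq : ¬ p ∣ q) (hq : 1 ≤ q) :
    ∑ e ∈ (p ^ (w + 1) * q).divisors.filter (fun e => Nat.gcd e N = 1),
        (e : ℂ) ^ (k - 1) * f (d * ((p ^ (w + 1) * q) / e) ^ 2)
    = (p : ℂ) ^ (k - 1) * ∑ e ∈ (p ^ w * q).divisors.filter (fun e => Nat.gcd e N = 1),
        (e : ℂ) ^ (k - 1) * f (d * ((p ^ w * q) / e) ^ 2)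
    + ∑ e ∈ q.divisors.filter (fun e => Nat.gcd e N = 1),
        (e : ℂ) ^ (k - 1) * f (p ^ (2 * (w + 1)) * d * (q / e) ^ 2) := by
  have hp0 : 0 < p := hp.pos
  have hne : p ^ (w + 1) * q ≠ 0 := by positivity
  have hne' : p ^ w * q ≠ 0 := by positivity
  have hfact : p ^ (w + 1) * q = p * (p ^ w * q) := by ring
  rw [← Finset.sum_filter_add_sum_filter_not
    ((p ^ (w + 1) * q).divisors.filter (fun e => Nat.gcd e N = 1)) (fun e => p ∣ e)]
  congr 1
  · rw [Finset.mul_sum]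
    apply Finset.sum_nbij' (fun e => e / p) (fun e => p * e)
    · intro e he
      simp only [Finset.mem_filter, Nat.mem_divisors] at he ⊢
      obtain ⟨⟨⟨hdvd, _⟩, hgcd⟩, hpe⟩ := he
      obtain ⟨e', rfl⟩ := hpe
      rw [Nat.mul_div_cancel_left _ hp0]
      refine ⟨⟨?_, hne'⟩, ?_⟩
      · rw [hfact] at hdvd
        exact (mul_dvd_mul_iff_left (by omega : p ≠ 0)).mp hdvd
      · exact Nat.Coprime.coprime_dvd_left (dvd_mul_left e' p) hgcd
    · intro e he
      simp only [Finset.mem_filter, Nat.mem_divisors] at he ⊢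
      obtain ⟨⟨hdvd, _⟩, hgcd⟩ := he
      refine ⟨⟨⟨?_, hne⟩, ?_⟩, Dvd.intro e rfl⟩
      · rw [hfact]; exact mul_dvd_mul_left p hdvd
      · exact Nat.Coprime.mul (hp.coprime_iff_not_dvd.mpr hpN) hgcd
    · intro e he
      simp only [Finset.mem_filter, Nat.mem_divisors] at he
      exact Nat.mul_div_cancel' he.2
    · intro e he
      exact Nat.mul_div_cancel_left _ hp0
    · intro e he
      simp only [Finset.mem_filter, Nat.mem_divisors] at he
      obtain ⟨⟨⟨hdvd, _⟩, hgcd⟩, hpe⟩ := he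
      obtain ⟨e', rfl⟩ := hpe
      rw [Nat.mul_div_cancel_left _ hp0, hfact, Nat.mul_div_mul_left _ _ hp0,
        Nat.cast_mul, mul_zpow]
      ring
  · apply Finset.sum_congr
    · ext e
      simp only [Finset.mem_filter, Nat.mem_divisors]
      constructor
      · rintro ⟨⟨⟨hdvd, _⟩, hgcd⟩, hpe⟩
        refine ⟨⟨?_, by omega⟩, hgcd⟩
        have hcop : Nat.Coprime e p := (Nat.coprime_comm.mp (hp.coprime_iff_not_dvd.mpr hpe))
        exact (Nat.Coprime.dvd_of_dvd_mul_left (Nat.Coprime.pow_right _ hcop) hdvd)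
      · rintro ⟨⟨hdvd, _⟩, hgcd⟩
        refine ⟨⟨⟨Dvd.dvd.mul_left hdvd _, hne⟩, hgcd⟩, fun hpe => hpq (hpe.trans hdvd)⟩
    · intro e he
      simp only [Finset.mem_filter, Nat.mem_divisors] at he
      obtain ⟨⟨hdvd, _⟩, hgcd⟩ := he
      have he0 : 0 < e := Nat.pos_of_dvd_of_pos hdvd hq
      rw [Nat.mul_div_assoc _ hdvd]
      congr 2
      obtain ⟨c, rfl⟩ := hdvd
      rw [Nat.mul_div_cancel_left _ he0]
      ring

theorem stmt_8 (k : ℤ) (N : ℕ) (hN : 1 ≤ N) (β : ℕ → ℕ → ℂ)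
    (hrec : ∀ (p q d v : ℕ), p.Prime → ¬ p ∣ N * q → 1 ≤ q → 1 ≤ v →
      β (p ^ v * q) d - (p : ℂ) ^ (k - 1) * β (p ^ (v - 1) * q) d
        = β q (p ^ (2 * v) * d))
    (hdeg : ∀ (u d : ℕ), 1 ≤ u → (∀ p : ℕ, p.Prime → p ∣ u → p ∣ N) →
      β u d = β 1 (d * u ^ 2)) :
    ∀ (u d : ℕ), 1 ≤ u →
      β u d = ∑ e ∈ u.divisors.filter (fun e => Nat.gcd e N = 1),
        (e : ℂ) ^ (k - 1) * β 1 (d * (u / e) ^ 2) := by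
  intro u
  induction u using Nat.strong_induction_on with
  | _ u IH =>
  intro d hu
  by_cases hall : ∀ p : ℕ, p.Prime → p ∣ u → p ∣ N
  · have hset : u.divisors.filter (fun e => Nat.gcd e N = 1) = {1} := by
      ext e
      simp only [Finset.mem_filter, Nat.mem_divisors, Finset.mem_singleton]
      constructor
      · rintro ⟨⟨hdvd, _⟩, hgcd⟩
        by_contra he1
        obtain ⟨p, hp, hpe⟩ := Nat.exists_prime_and_dvd he1
        exact hp.one_lt.ne' (Nat.eq_one_of_dvd_one
          (hgcd ▸ Nat.dvd_gcd hpe (hall p hp (hpe.trans hdvd))))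
      · rintro rfl
        exact ⟨⟨one_dvd u, by omega⟩, Nat.gcd_one_left N⟩
    rw [hset, Finset.sum_singleton]
    simp only [Nat.cast_one, one_zpow, Nat.div_one, one_mul]
    exact hdeg u d hu hall
  · push_neg at hall
    obtain ⟨p, hp, hpu, hpN⟩ := hall
    set v := u.factorization p with hv
    have hv1 : 1 ≤ v := (Nat.Prime.factorization_pos_of_dvd hp (by omega) hpu)
    obtain ⟨w, hw⟩ : ∃ w, v = w + 1 := ⟨v - 1, by omega⟩
    set q := u / p ^ v with hq
    have hpvu : p ^ v ∣ u := Nat.ordProj_dvd u p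
    have huq : u = p ^ v * q := (Nat.mul_div_cancel' hpvu).symm
    have hpq : ¬ p ∣ q := Nat.not_dvd_ordCompl hp (by omega)
    have hq1 : 1 ≤ q := Nat.pos_of_ne_zero (by
      intro h; rw [huq, h, mul_zero] at hu; omega)
    have hpNq : ¬ p ∣ N * q := by
      rw [hp.dvd_mul]; tauto
    have hrec' := hrec p q d v hp hpNq hq1 hv1
    have hlt1 : p ^ (v - 1) * q < u := by
      rw [huq]
      exact (Nat.mul_lt_mul_right hq1).mpr
        (Nat.pow_lt_pow_right hp.one_lt (by omega))
    have hlt2 : q < u := by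
      rw [huq]
      calc q = 1 * q := (one_mul q).symm
      _ < p ^ v * q := (Nat.mul_lt_mul_right hq1).mpr (Nat.one_lt_pow (by omega) hp.one_lt)
    have h1 := IH _ hlt1 d (by have := hp.pos; exact Nat.one_le_iff_ne_zero.mpr (by positivity))
    have h2 := IH _ hlt2 (p ^ (2 * v) * d) hq1
    rw [huq]
    have : β (p ^ v * q) d = (p:ℂ) ^ (k-1) * β (p ^ (v-1) * q) d + β q (p ^ (2*v) * d) := by
      linear_combination hrec'
    rw [this, h1, h2, hw]
    have := sum_split_aux k N (β 1) p q w d hp hpN hpq hq1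
    simp only [Nat.add_sub_cancel] at this ⊢
    rw [this]
end
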